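/- Fix t ≥ 0 and set Q = e^{t/2}. For s ∈ [0, e^t), the point h_s·g_{−t}·Γ of G/Γ lies in the transversal Ω if and only if s·e^{−t} = p/q for some coprime integers p, q with 0 ≤ p < q and q ≤ Q. In that case, h_s·g_{−t}·Γ = p_{a,b}·Γ with a = q/Q and b = q'/Q, where q' is the unique integer satisfying Q − q < q' ≤ Q and p·q' ≡ −1 (mod q). In particular, the intersection points of the closed horocycle of length e^t with Ω are in bijection with the Farey fractions of denominator at most e^{t/2} in [0,1). -/

import Mathlib

open MeasureTheory Real Matrix

noncomputable section

/-- `G = SL(2,ℝ)`. -/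
abbrev G := Matrix.SpecialLinearGroup (Fin 2) ℝ

/-- `Γ ≤ G` is the image of `SL(2,ℤ)` in `SL(2,ℝ)`. -/
def Γ : Subgroup G := (Matrix.SpecialLinearGroup.map (n := Fin 2) (Int.castRingHom ℝ)).range

/-- The Farey triangle `Δ = {(a,b) : 0 < a ≤ 1, 0 < b ≤ 1, a + b > 1}`. -/
def FareyTriangle : Set (ℝ × ℝ) :=
  {p | 0 < p.1 ∧ p.1 ≤ 1 ∧ 0 < p.2 ∧ p.2 ≤ 1 ∧ 1 < p.1 + p.2}

/-- The (unstable) horocycle flow matrices `h_s = [[1,0],[-s,1]]`. -/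
def hMat (s : ℝ) : G := ⟨!![1, 0; -s, 1], by simp [Matrix.det_fin_two_of]⟩

/-- The geodesic flow matrices `g_t = [[e^{t/2},0],[0,e^{-t/2}]]`. -/
def gMat (t : ℝ) : G :=
  ⟨!![Real.exp (t / 2), 0; 0, Real.exp (-(t / 2))], by
    rw [Matrix.det_fin_two_of, ← Real.exp_add]; norm_num⟩

/-- The matrices `p_{a,b} = [[a,b],[0,a⁻¹]]` (defined to be `1` in the degenerate
case `a = 0`, which never occurs in our usage). -/
def pSL (a b : ℝ) : G :=
  if h : a ≠ 0 then ⟨!![a, b; 0, a⁻¹], by rw [Matrix.det_fin_two_of]; field_simp; simp⟩ else 1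

/-- The Athreya–Cheung transversal `Ω = {p_{a,b} Γ : (a,b) ∈ Δ} ⊆ G/Γ`. -/
def Ω : Set (G ⧸ Γ) :=
  {x | ∃ a b : ℝ, (a, b) ∈ FareyTriangle ∧ x = QuotientGroup.mk (pSL a b)}

lemma exists_unique_q' (Q : ℝ) (p q : ℤ) (hq : 0 < q) (hqQ : (q : ℝ) ≤ Q)
    (hg : Int.gcd p q = 1) :
    ∃! q' : ℤ, Q - (q : ℝ) < (q' : ℝ) ∧ (q' : ℝ) ≤ Q ∧ q ∣ (p * q' + 1) := by
  obtain ⟨u, v, huv⟩ := Int.isCoprime_iff_gcd_eq_one.mpr hg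
  have hq0 : (0 : ℝ) < (q : ℝ) := by exact_mod_cast hq
  set c : ℤ := -u with hc
  have hcd : q ∣ p * c + 1 := ⟨v, by linear_combination -huv⟩
  set k : ℤ := ⌊(Q - (c : ℝ)) / (q : ℝ)⌋ with hk
  have h1 : (k : ℝ) * q ≤ Q - c := (le_div_iff₀ hq0).mp (Int.floor_le _)
  have h2 : Q - c < ((k : ℝ) + 1) * q := (div_lt_iff₀ hq0).mp (Int.lt_floor_add_one _)
  have hcop : IsCoprime (q : ℤ) p := (Int.isCoprime_iff_gcd_eq_one.mpr hg).symm
  refine ⟨c + k * q, ⟨by push_cast; linarith, by push_cast; linarith, ?_⟩, ?_⟩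
  · have : p * (c + k * q) + 1 = (p * c + 1) + (p * k) * q := by ring
    rw [this]
    exact dvd_add hcd (dvd_mul_left q (p * k))
  · rintro y ⟨hy1, hy2, hy3⟩
    have hdvd : q ∣ p * (y - (c + k * q)) := by
      have : p * (y - (c + k * q)) = (p * y + 1) - (p * (c + k * q) + 1) := by ring
      rw [this]
      exact dvd_sub hy3 (by
        have h : p * (c + k * q) + 1 = (p * c + 1) + (p * k) * q := by ring
        rw [h]; exact dvd_add hcd (dvd_mul_left q (p * k)))
    have hdvd2 : q ∣ y - (c + k * q) := hcop.dvd_of_dvd_mul_left hdvd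
    have hlt : y - (c + k * q) < q := by
      have h5 : ((y - (c + k * q) : ℤ) : ℝ) < (q : ℝ) := by push_cast; linarith
      exact_mod_cast h5
    have hgt : -q < y - (c + k * q) := by
      have h5 : ((-q : ℤ) : ℝ) < ((y - (c + k * q) : ℤ) : ℝ) := by push_cast; linarith
      exact_mod_cast h5
    have habs : |y - (c + k * q)| < q := abs_lt.mpr ⟨hgt, hlt⟩
    have := Int.eq_zero_of_abs_lt_dvd hdvd2 habs
    omega

lemma coset_eq (t s : ℝ) (p q q' : ℤ) (hq : 0 < q)
    (hfrac : s * Real.exp (-t) = (p : ℝ) / (q : ℝ)) (hdvd : q ∣ p * q' + 1) :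
    (QuotientGroup.mk (hMat s * gMat (-t)) : G ⧸ Γ) =
      QuotientGroup.mk (pSL ((q : ℝ) / Real.exp (t / 2)) ((q' : ℝ) / Real.exp (t / 2))) := by
  set Q := Real.exp (t / 2) with hQ
  have hQ0 : 0 < Q := Real.exp_pos _
  have hq0 : (0 : ℝ) < (q : ℝ) := by exact_mod_cast hq
  have ha : (q : ℝ) / Q ≠ 0 := by positivity
  set α : ℤ := (p * q' + 1) / q with hαdef
  have hα : α * q = p * q' + 1 := Int.ediv_mul_cancel hdvd
  have hdet : (!![α, -q'; -p, q]).det = 1 := by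
    rw [Matrix.det_fin_two_of]; nlinarith [hα]
  set γ : Matrix.SpecialLinearGroup (Fin 2) ℤ := ⟨!![α, -q'; -p, q], hdet⟩ with hγ
  have hp : (p : ℝ) = s * Real.exp (-t) * q := by
    field_simp at hfrac; linarith [hfrac]
  have hexp : Real.exp (-t) * Q = Q⁻¹ := by
    rw [hQ, ← Real.exp_neg, ← Real.exp_add]; ring_nf
  have key : hMat s * gMat (-t) =
      pSL ((q : ℝ) / Q) ((q' : ℝ) / Q) * (Matrix.SpecialLinearGroup.map (Int.castRingHom ℝ) γ) := by
    apply Subtype.ext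
    simp only [Matrix.SpecialLinearGroup.coe_mul, Matrix.SpecialLinearGroup.map_apply_coe]
    ext i j
    have hQi : Real.exp (-t / 2) = Q⁻¹ := by
      rw [neg_div, Real.exp_neg]
    have hQQ : Real.exp (-t) * (Q * Q) = 1 := by
      rw [hQ, ← Real.exp_add, ← Real.exp_add, ← Real.exp_zero]; congr 1; ring
    have hαR : (α : ℝ) * q = p * q' + 1 := by exact_mod_cast hα
    have hpQ : (p : ℝ) * (Q * Q) = s * q := by
      linear_combination (Q * Q) * hp + (s * (q : ℝ)) * hQQ
    fin_cases i <;> fin_cases j <;>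
      simp [hMat, gMat, pSL, ha, hγ, Matrix.SpecialLinearGroup.map,
        Matrix.mul_apply, Fin.sum_univ_two]
    · field_simp
      rw [← neg_div, hQi, inv_mul_cancel₀ hQ0.ne']
      linarith [hαR]
    · ring
    · field_simp
      rw [← neg_div, hQi]
      field_simp
      linarith [hpQ]
    · rw [div_mul_cancel₀ _ hq0.ne', hQ]
      congr 1
      ring
  rw [key, QuotientGroup.mk_mul_of_mem]
  exact ⟨γ, rfl⟩

lemma horo_forward (t s : ℝ) (hs0 : 0 ≤ s) (hs1 : s < Real.exp t)
    (h : (QuotientGroup.mk (hMat s * gMat (-t)) : G ⧸ Γ) ∈ Ω) :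
    ∃ p q : ℤ, 0 ≤ p ∧ p < q ∧ (q : ℝ) ≤ Real.exp (t / 2) ∧ Int.gcd p q = 1 ∧
      s * Real.exp (-t) = (p : ℝ) / (q : ℝ) := by
  obtain ⟨a, b, ⟨ha0, ha1, hb0, hb1, hab⟩, heq⟩ := h
  obtain ⟨γ, hγ⟩ := QuotientGroup.eq.mp heq
  set Q := Real.exp (t / 2) with hQ
  have hQ0 : 0 < Q := Real.exp_pos _
  have ha : a ≠ 0 := ne_of_gt ha0
  have hX : hMat s * gMat (-t) = pSL a b * (Matrix.SpecialLinearGroup.map (Int.castRingHom ℝ) γ⁻¹) := by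
    rw [map_inv, hγ]
    group
  have hM : ∀ i j, ((hMat s * gMat (-t) : G) : Matrix (Fin 2) (Fin 2) ℝ) i j =
      ((pSL a b * Matrix.SpecialLinearGroup.map (Int.castRingHom ℝ) γ⁻¹ : G) : Matrix (Fin 2) (Fin 2) ℝ) i j := by
    rw [hX]; intro i j; rfl
  set A := ((γ⁻¹ : Matrix.SpecialLinearGroup (Fin 2) ℤ) : Matrix (Fin 2) (Fin 2) ℤ) with hA
  have h00 := hM 0 0
  have h01 := hM 0 1
  have h10 := hM 1 0
  have h11 := hM 1 1
  simp only [Matrix.SpecialLinearGroup.coe_mul, Matrix.SpecialLinearGroup.map_apply_coe] at h00 h01 h10 h11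
  simp [hMat, gMat, pSL, ha, Matrix.SpecialLinearGroup.map, Matrix.mul_apply,
    Fin.sum_univ_two, ← hA] at h00 h01 h10 h11
  have hdet : A 0 0 * A 1 1 - A 0 1 * A 1 0 = 1 := by
    rw [← Matrix.det_fin_two]
    exact (γ⁻¹).2
  have hQi : Real.exp (-t / 2) = Q⁻¹ := by rw [neg_div, Real.exp_neg]
  have hQn : Real.exp (-(-t / 2)) = Q := by congr 1; ring
  rw [hQi] at h10
  rw [hQn] at h11
  have hQt : Real.exp (-t) = Q⁻¹ * Q⁻¹ := by
    rw [hQ, ← Real.exp_neg, ← Real.exp_add]; congr 1; ring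
  have hQQ : Q * Q = Real.exp t := by
    rw [hQ, ← Real.exp_add]; congr 1; ring
  have hA10 : ((A 1 0 : ℤ) : ℝ) * Q = -(s * a) := by
    field_simp at h10
    linarith
  have hqR : ((A 1 1 : ℤ) : ℝ) = a * Q := by
    field_simp at h11
    linarith
  refine ⟨-(A 1 0), A 1 1, ?_, ?_, ?_, ?_, ?_⟩
  · have h5 : (0 : ℝ) ≤ ((-(A 1 0) : ℤ) : ℝ) := by
      push_cast
      nlinarith [hA10, mul_nonneg hs0 ha0.le, hQ0]
    exact_mod_cast h5
  · have h5 : ((-(A 1 0) : ℤ) : ℝ) < ((A 1 1 : ℤ) : ℝ) := by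
      push_cast
      nlinarith [hA10, hqR, hQ0, ha0, hs1, hQQ, mul_pos (sub_pos.mpr (hQQ ▸ hs1)) ha0]
    exact_mod_cast h5
  · rw [hqR]
    nlinarith [hQ0, ha1]
  · exact Int.isCoprime_iff_gcd_eq_one.mp ⟨A 0 1, A 0 0, by linear_combination hdet⟩
  · have hq0' : ((A 1 1 : ℤ) : ℝ) ≠ 0 := by
      rw [hqR]; positivity
    rw [eq_div_iff hq0']
    push_cast
    rw [hqR, hQt]
    have hQne : Q ≠ 0 := hQ0.ne'
    field_simp
    linear_combination hA10

/-- Fix `t ≥ 0`, `Q = e^{t/2}`, and `s ∈ [0, e^t)`.  The point `h_s g_{-t} Γ` lies in `Ω`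
iff `s e^{-t} = p/q` for coprime integers `0 ≤ p < q` with `q ≤ Q`; in that case
`h_s g_{-t} Γ = p_{a,b} Γ` with `a = q/Q`, `b = q'/Q`, where `q'` is the unique integer
with `Q - q < q' ≤ Q` and `p q' ≡ -1 (mod q)`.  In particular, the intersection points of
the closed horocycle of length `e^t` with `Ω` are in bijection with the Farey fractions of
denominator at most `e^{t/2}` in `[0,1)`. -/
theorem closed_horocycle_meets_transversal_iff_farey (t s : ℝ) (ht : 0 ≤ t)
    (hs : s ∈ Set.Ico (0 : ℝ) (Real.exp t)) :
    ((QuotientGroup.mk (hMat s * gMat (-t)) : G ⧸ Γ) ∈ Ω ↔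
      ∃ p q : ℤ, 0 ≤ p ∧ p < q ∧ (q : ℝ) ≤ Real.exp (t / 2) ∧ Int.gcd p q = 1 ∧
        s * Real.exp (-t) = (p : ℝ) / (q : ℝ)) ∧
    (∀ p q : ℤ, 0 ≤ p → p < q → (q : ℝ) ≤ Real.exp (t / 2) → Int.gcd p q = 1 →
      s * Real.exp (-t) = (p : ℝ) / (q : ℝ) →
      (∃! q' : ℤ, Real.exp (t / 2) - (q : ℝ) < (q' : ℝ) ∧ (q' : ℝ) ≤ Real.exp (t / 2) ∧
        q ∣ (p * q' + 1)) ∧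
      (∀ q' : ℤ, Real.exp (t / 2) - (q : ℝ) < (q' : ℝ) → (q' : ℝ) ≤ Real.exp (t / 2) →
        q ∣ (p * q' + 1) →
        (QuotientGroup.mk (hMat s * gMat (-t)) : G ⧸ Γ) =
          QuotientGroup.mk (pSL ((q : ℝ) / Real.exp (t / 2)) ((q' : ℝ) / Real.exp (t / 2))))) := by
  obtain ⟨hs0, hs1⟩ := hs
  constructor
  · constructor
    · exact horo_forward t s hs0 hs1
    · rintro ⟨p, q, hp0, hpq, hqQ, hg, hfrac⟩
      have hq : 0 < q := lt_of_le_of_lt hp0 hpq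
      obtain ⟨q', ⟨hq1', hq2', hq3'⟩, -⟩ := exists_unique_q' (Real.exp (t / 2)) p q hq hqQ hg
      have hQ0 : (0 : ℝ) < Real.exp (t / 2) := Real.exp_pos _
      have hq0 : (0 : ℝ) < (q : ℝ) := by exact_mod_cast hq
      have hq'0 : (0 : ℝ) < (q' : ℝ) := by linarith
      refine ⟨(q : ℝ) / Real.exp (t / 2), (q' : ℝ) / Real.exp (t / 2),
        ⟨div_pos hq0 hQ0, (div_le_one hQ0).mpr hqQ, div_pos hq'0 hQ0,
         (div_le_one hQ0).mpr hq2', ?_⟩, coset_eq t s p q q' hq hfrac hq3'⟩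
      rw [← add_div, lt_div_iff₀ hQ0]
      linarith
  · intro p q hp0 hpq hqQ hg hfrac
    have hq : 0 < q := lt_of_le_of_lt hp0 hpq
    exact ⟨exists_unique_q' _ p q hq hqQ hg,
      fun q' _ _ h3 => coset_eq t s p q q' hq hfrac h3⟩
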